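/- arXiv:1907.03686 — 2 statements merged into one kernel-verified Lean document; each statement's English description precedes it below -/
import Mathlib

section
/- Let w be a weight structure on C and let H : C^op → A be a cohomological functor. Then the virtual t-truncation τ_{≤n}(H) is of weight range ≤ n (it annihilates C_{w≥n+1}) and τ_{≥m}(H) is of weight range ≥ m (it annihilates C_{w≤m-1}). -/
open CategoryTheory Category Limits Pretriangulated ZeroObject Opposite

universe v u u₂ v₂

variable (C : Type u) [Category.{v} C] [Preadditive C] [HasZeroObject C]
  [HasShift C ℤ] [∀ n : ℤ, (CategoryTheory.shiftFunctor C n).Additive] [Pretriangulated C]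

/-- `X` is a retract (direct summand) of `Y`. -/
def IsRetract {C : Type u} [Category.{v} C] (X Y : C) : Prop :=
  ∃ (s : X ⟶ Y) (r : Y ⟶ X), s ≫ r = 𝟙 X

/-- A weight structure on a pretriangulated category `C`, in the homological convention:
`le` is the class `C_{w≤0}` and `ge` is the class `C_{w≥0}`. -/
structure WeightStructure where
  le : Set C
  ge : Set C
  le_retract : ∀ ⦃X Y : C⦄, IsRetract X Y → Y ∈ le → X ∈ le
  ge_retract : ∀ ⦃X Y : C⦄, IsRetract X Y → Y ∈ ge → X ∈ ge
  le_shift : ∀ X : C, X ∈ le → X⟦(-1 : ℤ)⟧ ∈ le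
  ge_shift : ∀ X : C, X ∈ ge → X⟦(1 : ℤ)⟧ ∈ ge
  orth : ∀ ⦃X Y : C⦄, X ∈ le → Y ∈ ge → ∀ f : X ⟶ Y⟦(1 : ℤ)⟧, f = 0
  decomp : ∀ M : C, ∃ (L R : C) (f : L ⟶ M) (g : M ⟶ R) (h : R ⟶ L⟦(1 : ℤ)⟧),
    Triangle.mk f g h ∈ (distTriang C) ∧ L ∈ le ∧ R⟦(-1 : ℤ)⟧ ∈ ge

/-- A t-structure on a pretriangulated category `C`, in the homological convention:
`le` is the class `C_{t≤0}` and `ge` is the class `C_{t≥0}`. -/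
structure HomTStructure where
  le : Set C
  ge : Set C
  le_iso : ∀ ⦃X Y : C⦄, (X ≅ Y) → Y ∈ le → X ∈ le
  ge_iso : ∀ ⦃X Y : C⦄, (X ≅ Y) → Y ∈ ge → X ∈ ge
  le_shift : ∀ X : C, X ∈ le → X⟦(-1 : ℤ)⟧ ∈ le
  ge_shift : ∀ X : C, X ∈ ge → X⟦(1 : ℤ)⟧ ∈ ge
  orth : ∀ ⦃X Y : C⦄, X⟦(-1 : ℤ)⟧ ∈ ge → Y ∈ le → ∀ f : X ⟶ Y, f = 0
  decomp : ∀ M : C, ∃ (L R : C) (f : L ⟶ M) (g : M ⟶ R) (h : R ⟶ L⟦(1 : ℤ)⟧),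
    Triangle.mk f g h ∈ (distTriang C) ∧ L ∈ ge ∧ R⟦(1 : ℤ)⟧ ∈ le

/-- A contravariant additive functor is cohomological if it sends distinguished
triangles to exact sequences. -/
def IsCohomological {A : Type u₂} [Category.{v₂} A] [Abelian A]
    (H : Cᵒᵖ ⥤ A) [H.Additive] : Prop :=
  ∀ (T : Triangle C), ∀ hT : T ∈ distTriang C,
    (ShortComplex.mk (H.map T.mor₂.op) (H.map T.mor₁.op) (by
      rw [← H.map_comp, ← op_comp, comp_distTriang_mor_zero₁₂ _ hT, op_zero, H.map_zero])).Exact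

/-!
If `M` has weights `≥ n + 1`, orthogonality kills the truncation map `w_{≤n}M → M`. So the
comparison map `e : w_{≤n}M → w_{≤n+1}M` factors through `Q[-1]`, where `M → Q` is the
complementary truncation of weights `≥ n + 2`; as `Q[-1]` has weights `≥ n + 1`, orthogonality gives
`e = 0`, hence `H(e) = 0` and its image vanishes. The case of `τ_{≥m}` is dual.
-/

variable {C}

lemma Pretriangulated.hom_eq_zero_of_comp_mor₁_eq_zero {P X Y Z : C} {f : X ⟶ Y}
    {g : Y ⟶ Z} {h : Z ⟶ X⟦(1 : ℤ)⟧} (hT : Triangle.mk f g h ∈ distTriang C)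
    (hP : ∀ k : P ⟶ Z⟦(-1 : ℤ)⟧, k = 0) (e : P ⟶ X) (he : e ≫ f = 0) : e = 0 := by
  obtain ⟨k, rfl⟩ := Triangle.coyoneda_exact₂ _ (inv_rot_of_distTriang _ hT) e he
  rw [hP k]; exact zero_comp

lemma Pretriangulated.hom_eq_zero_of_mor₂_comp_eq_zero {P X Y Z : C} {f : X ⟶ Y}
    {g : Y ⟶ Z} {h : Z ⟶ X⟦(1 : ℤ)⟧} (hT : Triangle.mk f g h ∈ distTriang C)
    (hP : ∀ k : X⟦(1 : ℤ)⟧ ⟶ P, k = 0) (d : Z ⟶ P) (hd : g ≫ d = 0) : d = 0 := by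
  obtain ⟨k, rfl⟩ := Triangle.yoneda_exact₃ _ hT d hd
  rw [hP k]; exact comp_zero

namespace WeightStructure

variable (w : WeightStructure C)

lemma ge_of_iso {X Y : C} (e : X ≅ Y) (hY : Y ∈ w.ge) : X ∈ w.ge :=
  w.ge_retract ⟨e.hom, e.inv, e.hom_inv_id⟩ hY

lemma le_of_iso {X Y : C} (e : X ≅ Y) (hY : Y ∈ w.le) : X ∈ w.le :=
  w.le_retract ⟨e.hom, e.inv, e.hom_inv_id⟩ hY

lemma shift_shift_mem_ge {X : C} {a b c : ℤ} (h : a + b = c) (hX : X⟦c⟧ ∈ w.ge) :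
    X⟦a⟧⟦b⟧ ∈ w.ge :=
  w.ge_of_iso ((shiftFunctorAdd' C a b c h).app X).symm hX

lemma shift_shift_mem_le {X : C} {a b c : ℤ} (h : a + b = c) (hX : X⟦c⟧ ∈ w.le) :
    X⟦a⟧⟦b⟧ ∈ w.le :=
  w.le_of_iso ((shiftFunctorAdd' C a b c h).app X).symm hX

lemma hom_eq_zero_of_shift {X Y : C} {a b : ℤ} (hab : b + 1 = a) (hX : X⟦a⟧ ∈ w.le)
    (hY : Y⟦b⟧ ∈ w.ge) (f : X ⟶ Y) : f = 0 := by
  let ε := (shiftFunctorAdd' C b 1 a hab).app Y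
  apply (shiftFunctor C a).map_injective
  rw [Functor.map_zero, ← cancel_mono ε.hom, zero_comp]
  exact w.orth hX hY _

lemma lower_truncation_hom_eq_zero {n : ℤ} {M P₀ P₁ Q₁ : C} (hM : M⟦(-(n + 1) : ℤ)⟧ ∈ w.ge)
    {a₁ : P₁ ⟶ M} {b₁ : M ⟶ Q₁} {c₁ : Q₁ ⟶ P₁⟦(1 : ℤ)⟧}
    (hT₁ : Triangle.mk a₁ b₁ c₁ ∈ distTriang C) (hQ₁ : Q₁⟦(-(n + 2) : ℤ)⟧ ∈ w.ge)
    {a₀ : P₀ ⟶ M} (hP₀ : P₀⟦(-n : ℤ)⟧ ∈ w.le) (e : P₀ ⟶ P₁) (he : e ≫ a₁ = a₀) : e = 0 := by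
  have ha₀ : a₀ = 0 := w.hom_eq_zero_of_shift (by ring) hP₀ hM a₀
  refine Pretriangulated.hom_eq_zero_of_comp_mor₁_eq_zero hT₁ (fun k ↦ ?_) e (he.trans ha₀)
  have hQ₁' : Q₁⟦(-1 : ℤ)⟧⟦(-(n + 1) : ℤ)⟧ ∈ w.ge := w.shift_shift_mem_ge (by ring) hQ₁
  exact w.hom_eq_zero_of_shift (by ring) hP₀ hQ₁' k

lemma upper_truncation_hom_eq_zero {m : ℤ} {M A₀ Q₀ Q₁ : C} (hM : M⟦(1 - m : ℤ)⟧ ∈ w.le)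
    {a₀ : A₀ ⟶ M} {b₀ : M ⟶ Q₀} {c₀ : Q₀ ⟶ A₀⟦(1 : ℤ)⟧}
    (hT₀ : Triangle.mk a₀ b₀ c₀ ∈ distTriang C) (hQ₁ : Q₁⟦(-m : ℤ)⟧ ∈ w.ge)
    {b₁ : M ⟶ Q₁} (hA₀ : A₀⟦(-(m - 2) : ℤ)⟧ ∈ w.le) (d : Q₀ ⟶ Q₁) (hd : b₀ ≫ d = b₁) :
    d = 0 := by
  have hb₁ : b₁ = 0 := w.hom_eq_zero_of_shift (by ring) hM hQ₁ b₁
  refine Pretriangulated.hom_eq_zero_of_mor₂_comp_eq_zero hT₀ (fun k ↦ ?_) d (hd.trans hb₁)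
  have hA₀' : A₀⟦(1 : ℤ)⟧⟦(1 - m : ℤ)⟧ ∈ w.le := w.shift_shift_mem_le (by ring) hA₀
  exact w.hom_eq_zero_of_shift (by ring) hA₀' hQ₁ k

end WeightStructure

lemma isZero_image_map_op_of_eq_zero {D A : Type*} [Category D] [Preadditive D] [Category A]
    [Abelian A] (H : Dᵒᵖ ⥤ A) [H.Additive] {X Y : D} {f : X ⟶ Y} (hf : f = 0) :
    IsZero (image (H.map f.op)) :=
  (isZero_zero A).of_iso (imageZero' (by rw [hf, op_zero, H.map_zero]))

theorem virtual_truncation_weight_range_general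
    {A : Type u₂} [Category.{v₂} A] [Abelian A]
    (w : WeightStructure C) (H : Cᵒᵖ ⥤ A) [H.Additive] :
    -- τ_{≤n}(H) is of weight range ≤ n
    (∀ (n : ℤ) (M : C), M⟦(-(n + 1) : ℤ)⟧ ∈ w.ge →
      ∀ (P₁ Q₁ : C) (a₁ : P₁ ⟶ M) (b₁ : M ⟶ Q₁) (c₁ : Q₁ ⟶ P₁⟦(1 : ℤ)⟧),
        Triangle.mk a₁ b₁ c₁ ∈ (distTriang C) →
        P₁⟦(-(n + 1) : ℤ)⟧ ∈ w.le → Q₁⟦(-(n + 2) : ℤ)⟧ ∈ w.ge →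
      ∀ (P₀ Q₀ : C) (a₀ : P₀ ⟶ M) (b₀ : M ⟶ Q₀) (c₀ : Q₀ ⟶ P₀⟦(1 : ℤ)⟧),
        Triangle.mk a₀ b₀ c₀ ∈ (distTriang C) →
        P₀⟦(-n : ℤ)⟧ ∈ w.le → Q₀⟦(-(n + 1) : ℤ)⟧ ∈ w.ge →
      ∀ (e : P₀ ⟶ P₁), e ≫ a₁ = a₀ →
        IsZero (image (H.map e.op))) ∧
    -- τ_{≥m}(H) is of weight range ≥ m
    (∀ (m : ℤ) (M : C), M⟦(1 - m : ℤ)⟧ ∈ w.le →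
      ∀ (A₁ Q₁ : C) (a₁ : A₁ ⟶ M) (b₁ : M ⟶ Q₁) (c₁ : Q₁ ⟶ A₁⟦(1 : ℤ)⟧),
        Triangle.mk a₁ b₁ c₁ ∈ (distTriang C) →
        A₁⟦(-(m - 1) : ℤ)⟧ ∈ w.le → Q₁⟦(-m : ℤ)⟧ ∈ w.ge →
      ∀ (A₀ Q₀ : C) (a₀ : A₀ ⟶ M) (b₀ : M ⟶ Q₀) (c₀ : Q₀ ⟶ A₀⟦(1 : ℤ)⟧),
        Triangle.mk a₀ b₀ c₀ ∈ (distTriang C) →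
        A₀⟦(-(m - 2) : ℤ)⟧ ∈ w.le → Q₀⟦(-(m - 1) : ℤ)⟧ ∈ w.ge →
      ∀ (d : Q₀ ⟶ Q₁), b₀ ≫ d = b₁ →
        IsZero (image (H.map d.op))) := by
  refine ⟨?_, ?_⟩
  · intro n M hM P₁ Q₁ a₁ b₁ c₁ hT₁ _ hQ₁ P₀ Q₀ a₀ b₀ c₀ _ hP₀ _ e he
    exact isZero_image_map_op_of_eq_zero H
      (w.lower_truncation_hom_eq_zero hM hT₁ hQ₁ hP₀ e he)
  · intro m M hM A₁ Q₁ a₁ b₁ c₁ _ _ hQ₁ A₀ Q₀ a₀ b₀ c₀ hT₀ hA₀ _ d hd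
    exact isZero_image_map_op_of_eq_zero H
      (w.upper_truncation_hom_eq_zero hM hT₀ hQ₁ hA₀ d hd)

/-- τ_{≤n}(H) annihilates C_{w≥n+1} and τ_{≥m}(H) annihilates C_{w≤m-1}. -/
theorem virtual_truncation_weight_range
    {A : Type u₂} [Category.{v₂} A] [Abelian A]
    (w : WeightStructure C) (H : Cᵒᵖ ⥤ A) [H.Additive] (hH : IsCohomological C H) :
    -- τ_{≤n}(H) is of weight range ≤ n
    (∀ (n : ℤ) (M : C), M⟦(-(n + 1) : ℤ)⟧ ∈ w.ge →
      ∀ (P₁ Q₁ : C) (a₁ : P₁ ⟶ M) (b₁ : M ⟶ Q₁) (c₁ : Q₁ ⟶ P₁⟦(1 : ℤ)⟧),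
        Triangle.mk a₁ b₁ c₁ ∈ (distTriang C) →
        P₁⟦(-(n + 1) : ℤ)⟧ ∈ w.le → Q₁⟦(-(n + 2) : ℤ)⟧ ∈ w.ge →
      ∀ (P₀ Q₀ : C) (a₀ : P₀ ⟶ M) (b₀ : M ⟶ Q₀) (c₀ : Q₀ ⟶ P₀⟦(1 : ℤ)⟧),
        Triangle.mk a₀ b₀ c₀ ∈ (distTriang C) →
        P₀⟦(-n : ℤ)⟧ ∈ w.le → Q₀⟦(-(n + 1) : ℤ)⟧ ∈ w.ge →
      ∀ (e : P₀ ⟶ P₁), e ≫ a₁ = a₀ →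
        IsZero (image (H.map e.op))) ∧
    -- τ_{≥m}(H) is of weight range ≥ m
    (∀ (m : ℤ) (M : C), M⟦(1 - m : ℤ)⟧ ∈ w.le →
      ∀ (A₁ Q₁ : C) (a₁ : A₁ ⟶ M) (b₁ : M ⟶ Q₁) (c₁ : Q₁ ⟶ A₁⟦(1 : ℤ)⟧),
        Triangle.mk a₁ b₁ c₁ ∈ (distTriang C) →
        A₁⟦(-(m - 1) : ℤ)⟧ ∈ w.le → Q₁⟦(-m : ℤ)⟧ ∈ w.ge →
      ∀ (A₀ Q₀ : C) (a₀ : A₀ ⟶ M) (b₀ : M ⟶ Q₀) (c₀ : Q₀ ⟶ A₀⟦(1 : ℤ)⟧),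
        Triangle.mk a₀ b₀ c₀ ∈ (distTriang C) →
        A₀⟦(-(m - 2) : ℤ)⟧ ∈ w.le → Q₀⟦(-(m - 1) : ℤ)⟧ ∈ w.ge →
      ∀ (d : Q₀ ⟶ Q₁), b₀ ≫ d = b₁ →
        IsZero (image (H.map d.op))) :=
  virtual_truncation_weight_range_general w H
end

section
/- Let w be a weight structure on a triangulated category C and M an object of C. The following are equivalent: (i) M ∈ C_{w≥0}; (ii) H(M) = 0 for every cohomological functor H : C^op → Ab of weight range ≤ -1; (iv) (τ_{≤-1}H_M)(M) = 0, where H_M = Hom(−, M). -/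
open CategoryTheory Category Limits Pretriangulated ZeroObject Opposite

universe v u u₂ v₂

variable (C : Type u) [Category.{v} C] [Preadditive C] [HasZeroObject C]
  [HasShift C ℤ] [∀ n : ℤ, (CategoryTheory.shiftFunctor C n).Additive] [Pretriangulated C]

/-!
If `M ∈ C_{w≥0}`, (ii) is immediate and (iv) holds because `Hom(C_{w≤-1}, C_{w≥0}) = 0`.
Conversely, `M` lies in `C_{w≥0}` as soon as `a₁ : w_{≤-1}M ⟶ M` vanishes, being then a retract
of `w_{≥0}M`. Under (iv) this holds because `a₁ = e ≫ a₀` is the image of `a₀` under `e^*`; under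
(ii) apply the hypothesis to `H = τ_{≤-1}H_M`, in which `a₁` is an element of `H(M)`. What makes
this `H` a cohomological functor vanishing on `C_{w≥0}` is that a map from an object of
`C_{w≤-1}` to `w_{≤0}N` is determined by its composite with `w_{≤0}N ⟶ N` (`hom_ext₀`): this
makes the action on morphisms independent of the chosen lifts, and drives the diagram chase
for exactness.
-/

lemma Limits.eq_zero_of_isZero_image {A : Type*} [Category A] [HasZeroMorphisms A]
    {X Y : A} {f : X ⟶ Y} [HasImage f] (h : IsZero (image f)) : f = 0 := by
  rw [← image.fac f, h.eq_zero_of_src (image.ι f), comp_zero]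

variable {C}

lemma Pretriangulated.isRetract_obj₂_obj₃_of_mor₁_eq_zero (T : Triangle C)
    (hT : T ∈ distTriang C) (h : T.mor₁ = 0) : IsRetract T.obj₂ T.obj₃ := by
  obtain ⟨r, hr⟩ := Triangle.yoneda_exact₂ T hT (𝟙 T.obj₂) (by rw [h, zero_comp])
  exact ⟨T.mor₂, r, hr.symm⟩

lemma Pretriangulated.distinguished_mk_comp_hom_inv_comp {X Y Z Y' : C} {f : X ⟶ Y} {g : Y ⟶ Z}
    {h : Z ⟶ X⟦(1 : ℤ)⟧} (hT : Triangle.mk f g h ∈ distTriang C) (i : Y ≅ Y') :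
    Triangle.mk (f ≫ i.hom) (i.inv ≫ g) h ∈ distTriang C := by
  refine isomorphic_distinguished _ hT _
    (Triangle.isoMk _ _ (Iso.refl _) i.symm (Iso.refl _) ?_ (comp_id _) ?_)
  · show (f ≫ i.hom) ≫ i.inv = 𝟙 X ≫ f
    simp
  · show h ≫ (𝟙 X)⟦(1 : ℤ)⟧' = 𝟙 Z ≫ h
    simp

namespace WeightStructure

variable (w : WeightStructure C)

lemma mem_le_of_iso {X Y : C} (i : X ≅ Y) (h : Y ∈ w.le) : X ∈ w.le :=
  w.le_retract ⟨i.hom, i.inv, i.hom_inv_id⟩ h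

lemma mem_le_of_shift_mem_le {X : C} (h : X⟦(1 : ℤ)⟧ ∈ w.le) : X ∈ w.le :=
  w.mem_le_of_iso (shiftShiftNeg X (1 : ℤ)).symm (w.le_shift _ h)

lemma hom_eq_zero_of_shift_mem_le {X Y : C} (hX : X⟦(1 : ℤ)⟧ ∈ w.le) (hY : Y ∈ w.ge)
    (f : X ⟶ Y) : f = 0 :=
  (shiftFunctor C (1 : ℤ)).map_injective (by simpa using w.orth hX hY (f⟦(1 : ℤ)⟧'))

lemma hom_eq_zero_of_mem_le {X Y : C} (hX : X ∈ w.le) (hY : Y⟦(-1 : ℤ)⟧ ∈ w.ge)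
    (f : X ⟶ Y) : f = 0 := by
  rw [← cancel_mono (shiftNegShift Y (1 : ℤ)).inv, zero_comp]
  exact w.orth hX hY _

lemma mem_le_of_distTriang (T : Triangle C) (hT : T ∈ distTriang C) (h₁ : T.obj₁ ∈ w.le)
    (h₃ : T.obj₃ ∈ w.le) : T.obj₂ ∈ w.le := by
  obtain ⟨P, Q, a, b, c, hPQ, hP, hQ⟩ := w.decomp T.obj₂
  obtain ⟨b', hb'⟩ := Triangle.yoneda_exact₂ T hT b (w.hom_eq_zero_of_mem_le h₁ hQ _)
  have hb : b = 0 := by rw [hb', w.hom_eq_zero_of_mem_le h₃ hQ b', comp_zero]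
  obtain ⟨r, hr⟩ := Triangle.coyoneda_exact₂ _ hPQ (𝟙 T.obj₂)
    (by simp only [Triangle.mk_mor₂, hb]; exact comp_zero)
  exact w.le_retract ⟨r, a, hr.symm⟩ hP

/-- Weight decompositions `P₁ → N → Q₁` and `P₀ → N → Q₀` of `N` at levels `-1` and `0`
(`w_{≤-1}N` is `P₁` and `w_{≤0}N` is `P₀`), together with a morphism `e : P₁ ⟶ P₀` over `N`. -/
structure TruncationPair (N : C) where
  P₁ : C
  Q₁ : C
  a₁ : P₁ ⟶ N
  b₁ : N ⟶ Q₁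
  c₁ : Q₁ ⟶ P₁⟦(1 : ℤ)⟧
  dist₁ : Triangle.mk a₁ b₁ c₁ ∈ distTriang C
  hP₁ : P₁⟦(1 : ℤ)⟧ ∈ w.le
  hQ₁ : Q₁ ∈ w.ge
  P₀ : C
  Q₀ : C
  a₀ : P₀ ⟶ N
  b₀ : N ⟶ Q₀
  c₀ : Q₀ ⟶ P₀⟦(1 : ℤ)⟧
  dist₀ : Triangle.mk a₀ b₀ c₀ ∈ distTriang C
  hP₀ : P₀ ∈ w.le
  hQ₀ : Q₀⟦(-1 : ℤ)⟧ ∈ w.ge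
  e : P₁ ⟶ P₀
  he : e ≫ a₀ = a₁

lemma nonempty_truncationPair (N : C) : Nonempty (w.TruncationPair N) := by
  obtain ⟨P₀, Q₀, a₀, b₀, c₀, dist₀, hP₀, hQ₀⟩ := w.decomp N
  obtain ⟨L, R, f, g, h, hLR, hL, hR⟩ := w.decomp (N⟦(1 : ℤ)⟧)
  let T := (Triangle.shiftFunctor C (-1 : ℤ)).obj (Triangle.mk f g h)
  let i : (N⟦(1 : ℤ)⟧)⟦(-1 : ℤ)⟧ ≅ N := shiftShiftNeg N (1 : ℤ)
  have dist₁ : Triangle.mk (T.mor₁ ≫ i.hom) (i.inv ≫ T.mor₂) T.mor₃ ∈ distTriang C :=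
    Pretriangulated.distinguished_mk_comp_hom_inv_comp
      (Triangle.shift_distinguished _ hLR (-1)) i
  have hP₁ : (L⟦(-1 : ℤ)⟧)⟦(1 : ℤ)⟧ ∈ w.le := w.mem_le_of_iso (shiftNegShift L (1 : ℤ)) hL
  obtain ⟨e, he⟩ := Triangle.coyoneda_exact₂ _ dist₀ (T.mor₁ ≫ i.hom)
    (w.hom_eq_zero_of_mem_le (w.mem_le_of_shift_mem_le hP₁) hQ₀ _)
  exact ⟨⟨_, _, _, _, _, dist₁, hP₁, hR, P₀, Q₀, a₀, b₀, c₀, dist₀, hP₀, hQ₀, e, he.symm⟩⟩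

namespace TruncationPair

variable {w} {N N' : C} (D : w.TruncationPair N) (D' : w.TruncationPair N')

lemma mem_ge_of_a₁_eq_zero (h : D.a₁ = 0) : N ∈ w.ge :=
  w.ge_retract (Pretriangulated.isRetract_obj₂_obj₃_of_mor₁_eq_zero _ D.dist₁ h) D.hQ₁

lemma hom_ext₀ {R : C} (hR : R⟦(1 : ℤ)⟧ ∈ w.le) {δ δ' : R ⟶ D.P₀}
    (h : δ ≫ D.a₀ = δ' ≫ D.a₀) : δ = δ' := by
  obtain ⟨q, hq⟩ := Triangle.coyoneda_exact₂ _ (inv_rot_of_distTriang _ D.dist₀) (δ - δ')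
    (by show (δ - δ') ≫ D.a₀ = 0; rw [Preadditive.sub_comp, h, sub_self])
  have hq₀ : q = 0 := w.hom_eq_zero_of_shift_mem_le hR D.hQ₀ q
  rw [← sub_eq_zero, hq, hq₀]
  exact zero_comp

lemma e_eq_zero_of_mem_ge (hN : N ∈ w.ge) : D.e = 0 :=
  D.hom_ext₀ D.hP₁ (by rw [D.he, zero_comp]; exact w.hom_eq_zero_of_shift_mem_le D.hP₁ hN _)

lemma exists_lift₁ (φ : N ⟶ N') : ∃ l : D.P₁ ⟶ D'.P₁, l ≫ D'.a₁ = D.a₁ ≫ φ :=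
  (Triangle.coyoneda_exact₂ _ D'.dist₁ (D.a₁ ≫ φ)
    (w.hom_eq_zero_of_shift_mem_le D.hP₁ D'.hQ₁ _)).imp fun _ hl => hl.symm

lemma exists_lift₀ (φ : N ⟶ N') : ∃ l : D.P₀ ⟶ D'.P₀, l ≫ D'.a₀ = D.a₀ ≫ φ :=
  (Triangle.coyoneda_exact₂ _ D'.dist₀ (D.a₀ ≫ φ)
    (w.hom_eq_zero_of_mem_le D.hP₀ D'.hQ₀ _)).imp fun _ hl => hl.symm

noncomputable def lift₁ (φ : N ⟶ N') : D.P₁ ⟶ D'.P₁ := (D.exists_lift₁ D' φ).choose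

lemma lift₁_comp_a₁ (φ : N ⟶ N') : D.lift₁ D' φ ≫ D'.a₁ = D.a₁ ≫ φ :=
  (D.exists_lift₁ D' φ).choose_spec

variable (M : C)

/-- The value `(τ_{≤-1} H_M)(N)` of the virtual truncation. -/
def virtualTrunc : AddSubgroup (D.P₁ ⟶ M) := (Preadditive.leftComp M D.e).range

variable {D D' M}

lemma a₁_mem_virtualTrunc : D.a₁ ∈ D.virtualTrunc N := ⟨D.a₀, D.he⟩

lemma e_comp_mem_virtualTrunc (s : D.P₀ ⟶ M) : D.e ≫ s ∈ D.virtualTrunc M := ⟨s, rfl⟩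

lemma comp_eq_comp_of_mem_virtualTrunc {R : C} (hR : R⟦(1 : ℤ)⟧ ∈ w.le) {l l' : R ⟶ D.P₁}
    (h : l ≫ D.a₁ = l' ≫ D.a₁) {x : D.P₁ ⟶ M} (hx : x ∈ D.virtualTrunc M) :
    l ≫ x = l' ≫ x := by
  obtain ⟨s, rfl⟩ := hx
  have : l ≫ D.e = l' ≫ D.e := D.hom_ext₀ hR (by simpa only [assoc, D.he])
  simp only [Preadditive.leftComp, AddMonoidHom.mk'_apply, ← assoc, this]

lemma lift₁_comp_mem_virtualTrunc (φ : N ⟶ N') {x : D'.P₁ ⟶ M}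
    (hx : x ∈ D'.virtualTrunc M) : D.lift₁ D' φ ≫ x ∈ D.virtualTrunc M := by
  obtain ⟨s, rfl⟩ := hx
  obtain ⟨l₀, hl₀⟩ := D.exists_lift₀ D' φ
  have : D.lift₁ D' φ ≫ D'.e = D.e ≫ l₀ :=
    D'.hom_ext₀ D.hP₁ (by simp only [assoc, D'.he, hl₀, lift₁_comp_a₁, ← D.he])
  simpa only [Preadditive.leftComp, AddMonoidHom.mk'_apply, ← assoc, this] using
    D.e_comp_mem_virtualTrunc (l₀ ≫ s)

lemma comp_eq_zero_of_comp_a₁_comp_mor₂_eq_zero {T : Triangle C} (hT : T ∈ distTriang C)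
    (D₁ : w.TruncationPair T.obj₁) (D₂ : w.TruncationPair T.obj₂)
    {x : D₂.P₁ ⟶ M} (hx : x ∈ D₂.virtualTrunc M) (hfx : D₁.lift₁ D₂ T.mor₁ ≫ x = 0)
    {R : C} (hR : R⟦(1 : ℤ)⟧ ∈ w.le) (r : R ⟶ D₂.P₁) (hr : r ≫ D₂.a₁ ≫ T.mor₂ = 0) :
    r ≫ x = 0 := by
  obtain ⟨n, hn⟩ := Triangle.coyoneda_exact₂ T hT (r ≫ D₂.a₁) (by rwa [assoc])
  obtain ⟨k, hk⟩ : ∃ k : R ⟶ D₁.P₁, n = k ≫ D₁.a₁ := Triangle.coyoneda_exact₂ _ D₁.dist₁ n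
    (w.hom_eq_zero_of_shift_mem_le hR D₁.hQ₁ _)
  have : r ≫ D₂.a₁ = (k ≫ D₁.lift₁ D₂ T.mor₁) ≫ D₂.a₁ := by
    rw [hn, hk, assoc, assoc, lift₁_comp_a₁]
  rw [comp_eq_comp_of_mem_virtualTrunc hR this hx, assoc, hfx, comp_zero]

lemma exists_mem_virtualTrunc_lift₁_comp_eq {T : Triangle C} (hT : T ∈ distTriang C)
    (D₁ : w.TruncationPair T.obj₁) (D₂ : w.TruncationPair T.obj₂)
    (D₃ : w.TruncationPair T.obj₃) {x : D₂.P₁ ⟶ M} (hx : x ∈ D₂.virtualTrunc M)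
    (hfx : D₁.lift₁ D₂ T.mor₁ ≫ x = 0) :
    ∃ y ∈ D₃.virtualTrunc M, D₂.lift₁ D₃ T.mor₂ ≫ y = x := by
  -- `x` factors through `m` since it kills the fibre `r` of `m`: the cone `Z` of `m` is an
  -- extension of `P₁⟦1⟧` by `P₀`, so `r` is a map out of `C_{w≤-1}`
  let m := D₂.lift₁ D₃ T.mor₂ ≫ D₃.e
  obtain ⟨Z, u, v, hm⟩ := distinguished_cocone_triangle m
  have hZ : Z ∈ w.le := w.mem_le_of_distTriang _ (rot_of_distTriang _ hm) D₃.hP₀ D₂.hP₁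
  let r : Z⟦(-1 : ℤ)⟧ ⟶ D₂.P₁ := (Triangle.mk m u v).invRotate.mor₁
  have hrx : r ≫ x = 0 := by
    refine comp_eq_zero_of_comp_a₁_comp_mor₂_eq_zero hT D₁ D₂ hx hfx
      (w.mem_le_of_iso (shiftNegShift Z (1 : ℤ)) hZ) r ?_
    have hrm : r ≫ m = 0 := comp_distTriang_mor_zero₁₂ _ (inv_rot_of_distTriang _ hm)
    rw [← lift₁_comp_a₁, ← D₃.he, ← assoc, ← assoc, assoc r, hrm, zero_comp]
  obtain ⟨t, rfl⟩ := Triangle.yoneda_exact₂ _ (inv_rot_of_distTriang _ hm) x hrx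
  exact ⟨D₃.e ≫ t, e_comp_mem_virtualTrunc t, (assoc _ _ _).symm⟩

end TruncationPair

section Functor

variable {w} (d : ∀ N : C, w.TruncationPair N) (M : C)

/-- The virtual truncation `τ_{≤-1}(H_M)`, computed from the chosen truncations `d`. -/
noncomputable def virtualTruncFunctor : Cᵒᵖ ⥤ AddCommGrpCat.{v} where
  obj N := AddCommGrpCat.of ((d N.unop).virtualTrunc M)
  map {N N'} φ := AddCommGrpCat.ofHom <|
    (((Preadditive.leftComp M ((d N'.unop).lift₁ (d N.unop) φ.unop)).comp
      ((d N.unop).virtualTrunc M).subtype).codRestrict _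
      fun x => TruncationPair.lift₁_comp_mem_virtualTrunc φ.unop x.2)
  map_id N := by
    ext x
    refine (TruncationPair.comp_eq_comp_of_mem_virtualTrunc (d N.unop).hP₁ (l' := 𝟙 _) ?_
      x.2).trans (id_comp _)
    simp [TruncationPair.lift₁_comp_a₁]
  map_comp φ ψ := by
    ext x
    refine (TruncationPair.comp_eq_comp_of_mem_virtualTrunc (d _).hP₁ ?_ x.2).trans
      (assoc _ _ _)
    rw [TruncationPair.lift₁_comp_a₁, assoc, TruncationPair.lift₁_comp_a₁, ← assoc,
      TruncationPair.lift₁_comp_a₁, assoc]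
    rfl

instance : (virtualTruncFunctor d M).Additive where
  map_add {N N' φ ψ} := by
    ext x
    refine Subtype.ext <|
      (TruncationPair.comp_eq_comp_of_mem_virtualTrunc (d N'.unop).hP₁ ?_ x.2).trans
      (Preadditive.add_comp _ _ _ _ _ _)
    simp [TruncationPair.lift₁_comp_a₁]

lemma isCohomological_virtualTruncFunctor : IsCohomological C (virtualTruncFunctor d M) := by
  intro T hT
  rw [ShortComplex.ab_exact_iff]
  intro x hx
  obtain ⟨y, hy, hyx⟩ := TruncationPair.exists_mem_virtualTrunc_lift₁_comp_eq hT (d _) (d _)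
    (d _) x.2 (congrArg Subtype.val hx)
  exact ⟨⟨y, hy⟩, Subtype.ext hyx⟩

lemma isZero_virtualTruncFunctor_obj {N : C} (hN : N ∈ w.ge) :
    IsZero ((virtualTruncFunctor d M).obj (op N)) := by
  rw [AddCommGrpCat.isZero_iff_subsingleton]
  constructor
  rintro ⟨_, s, rfl⟩ ⟨_, t, rfl⟩
  apply Subtype.ext
  simp [Preadditive.leftComp, (d N).e_eq_zero_of_mem_ge hN]

end Functor

end WeightStructure

/-- Criteria for M ∈ C_{w≥0}: (i) ⟺ (ii) vanishing of all weight range ≤ -1 cohomological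
functors at M; (i) ⟺ (iv) vanishing of (τ_{≤-1}H_M)(M). -/
theorem ge_iff_vanishing (w : WeightStructure C) (M : C) :
    (M ∈ w.ge ↔
      ∀ (H : Cᵒᵖ ⥤ AddCommGrpCat.{v}) [H.Additive], IsCohomological C H →
        (∀ X : C, X ∈ w.ge → IsZero (H.obj (op X))) → IsZero (H.obj (op M))) ∧
    (M ∈ w.ge ↔
      ∀ (P₁ Q₁ : C) (a₁ : P₁ ⟶ M) (b₁ : M ⟶ Q₁) (c₁ : Q₁ ⟶ P₁⟦(1 : ℤ)⟧),
        Triangle.mk a₁ b₁ c₁ ∈ (distTriang C) →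
        P₁⟦(1 : ℤ)⟧ ∈ w.le → Q₁ ∈ w.ge →
      ∀ (P₀ Q₀ : C) (a₀ : P₀ ⟶ M) (b₀ : M ⟶ Q₀) (c₀ : Q₀ ⟶ P₀⟦(1 : ℤ)⟧),
        Triangle.mk a₀ b₀ c₀ ∈ (distTriang C) →
        P₀ ∈ w.le → Q₀⟦(-1 : ℤ)⟧ ∈ w.ge →
      ∀ (e : P₁ ⟶ P₀), e ≫ a₀ = a₁ →
        IsZero (image ((preadditiveYoneda.obj M).map e.op))) := by
  open WeightStructure in
  let d : ∀ N : C, w.TruncationPair N := fun N => (w.nonempty_truncationPair N).some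
  let D := d M
  refine ⟨⟨fun hM _ _ _ hH => hH M hM, fun h => D.mem_ge_of_a₁_eq_zero ?_⟩,
    ⟨fun hM _ _ _ _ _ _ hP₁ _ _ _ _ _ _ _ _ _ _ _ => ?_, fun h => D.mem_ge_of_a₁_eq_zero ?_⟩⟩
  · have hτ := h (virtualTruncFunctor d M) (isCohomological_virtualTruncFunctor d M)
      fun _ hX => isZero_virtualTruncFunctor_obj d M hX
    rw [AddCommGrpCat.isZero_iff_subsingleton] at hτ
    exact congrArg Subtype.val
      (hτ.elim (⟨_, D.a₁_mem_virtualTrunc⟩ : (virtualTruncFunctor d M).obj (op M)) 0)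
  · refine IsZero.of_mono (image.ι _)
      (AddCommGrpCat.isZero_iff_subsingleton.mpr ⟨fun f g => ?_⟩)
    exact (w.hom_eq_zero_of_shift_mem_le hP₁ hM f).trans
      (w.hom_eq_zero_of_shift_mem_le hP₁ hM g).symm
  · have he := Limits.eq_zero_of_isZero_image (h D.P₁ D.Q₁ D.a₁ D.b₁ D.c₁ D.dist₁ D.hP₁ D.hQ₁
      D.P₀ D.Q₀ D.a₀ D.b₀ D.c₀ D.dist₀ D.hP₀ D.hQ₀ D.e D.he)
    rw [← D.he]
    exact congrArg (fun F => F D.a₀) he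
end
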